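/- Let f : P → Q be an injective S-linear map between finitely generated projective S-modules whose cokernel is annihilated by ω, and let f_Σ : Q → P be the unique map with f ∘ f_Σ = ω·id_Q and f_Σ ∘ f = ω·id_P. Define i₁ = (id_P, f) : P → P ⊕ Q, i₀ = (f_Σ, id_Q) : Q → P ⊕ Q, π₁ = [−f, id_Q] : P ⊕ Q → Q and π₀ = [id_P, −f_Σ] : P ⊕ Q → P. Then the rows 0 → P →i₁→ P ⊕ Q →π₁→ Q → 0 and 0 → Q →i₀→ P ⊕ Q →π₀→ P → 0 are exact, the squares (ω·id_P ⊕ id_Q) ∘ i₁ = i₀ ∘ f and (−f_Σ) ∘ π₁ = π₀ ∘ (ω·id_P ⊕ id_Q) commute, and −f_Σ is injective with cokernel annihilated by ω. (The short exact sequence 0 → (P →f→ Q) → (P ⊕ Q →ω⊕id→ P ⊕ Q) → (Q →−f_Σ→ P) → 0 in Mon(ω, 𝒫), used in the proof of Theorem 3.2 of the paper to compute the cosyzygy Ω⁻¹(P →f→ Q) = (Q →−f_Σ→ P).) -/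

import Mathlib

/-! The two rows are the graph of `f` and the transposed graph of `fSig`, so their exactness holds
for any pair of linear maps; the squares commute because `fSig ∘ f = ω`. Injectivity of `fSig` is the one step needing
more: by `f ∘ fSig = ω` it reduces to `ω` being a non-zerodivisor on `Q`, which holds since
a projective module is flat. -/

open Function LinearMap

section Rows

variable {R M N : Type*} [Ring R] [AddCommGroup M] [Module R M] [AddCommGroup N] [Module R N]

theorem LinearMap.injective_id_prod (g : M →ₗ[R] N) : Injective (LinearMap.id.prod g) :=
  fun _ _ h => congrArg Prod.fst h

theorem LinearMap.injective_prod_id (g : N →ₗ[R] M) : Injective (g.prod LinearMap.id) :=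
  fun _ _ h => congrArg Prod.snd h

theorem LinearMap.surjective_coprod_id (g : M →ₗ[R] N) : Surjective (g.coprod LinearMap.id) :=
  fun q => ⟨(0, q), by simp⟩

theorem LinearMap.surjective_id_coprod (g : N →ₗ[R] M) : Surjective (LinearMap.id.coprod g) :=
  fun p => ⟨(p, 0), by simp⟩

theorem LinearMap.range_id_prod_eq_ker_neg_coprod_id (g : M →ₗ[R] N) :
    range (LinearMap.id.prod g) = ker ((-g).coprod LinearMap.id) :=
  g.graph_eq_range_prod.symm.trans g.graph_eq_ker_coprod

theorem LinearMap.range_prod_id_eq_ker_id_coprod_neg (g : N →ₗ[R] M) :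
    range (g.prod LinearMap.id) = ker (LinearMap.id.coprod (-g)) := by
  ext ⟨p, q⟩
  simp only [mem_range, mem_ker, prod_apply, coprod_apply, id_coe, id_eq, neg_apply,
    add_neg_eq_zero]
  constructor
  · rintro ⟨x, hx⟩
    obtain ⟨rfl, rfl⟩ := Prod.mk.inj hx
    rfl
  · rintro rfl
    exact ⟨q, rfl⟩

end Rows

section SigmaMap

variable {S P Q : Type*} [CommRing S] [AddCommGroup P] [Module S P] [AddCommGroup Q] [Module S Q]
  {ω : S} {f : P →ₗ[S] Q} {fSig : Q →ₗ[S] P}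

theorem smulId_prodMap_comp_id_prod (h : fSig ∘ₗ f = ω • LinearMap.id) :
    (prodMap (ω • LinearMap.id) LinearMap.id) ∘ₗ (LinearMap.id.prod f) =
      (fSig.prod LinearMap.id) ∘ₗ f := by
  have hp : ∀ p, fSig (f p) = ω • p := LinearMap.congr_fun h
  ext p <;> simp [hp]

theorem neg_comp_neg_coprod_id (h : fSig ∘ₗ f = ω • LinearMap.id) :
    (-fSig) ∘ₗ ((-f).coprod LinearMap.id) =
      (LinearMap.id.coprod (-fSig)) ∘ₗ prodMap (ω • LinearMap.id) LinearMap.id := by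
  have hp : ∀ p, fSig (f p) = ω • p := LinearMap.congr_fun h
  ext p <;> simp [hp]

theorem injective_of_comp_eq_smul_id (hω : IsSMulRegular Q ω) (h : f ∘ₗ fSig = ω • LinearMap.id) :
    Injective fSig := by
  refine fun a b hab => hω ?_
  have hq : ∀ q, f (fSig q) = ω • q := LinearMap.congr_fun h
  simpa [hq] using congrArg f hab

theorem smul_mem_range_of_comp_eq_smul_id (h : fSig ∘ₗ f = ω • LinearMap.id) (p : P) :
    ω • p ∈ range fSig :=
  ⟨f p, LinearMap.congr_fun h p⟩

end SigmaMap

theorem stmt_12_general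
    {S : Type*} [CommRing S]
    (ω : S) (hω : ω ∈ nonZeroDivisors S)
    {P Q : Type*}
    [AddCommGroup P] [Module S P]
    [AddCommGroup Q] [Module S Q] [Module.Projective S Q]
    (f : P →ₗ[S] Q)
    (fSig : Q →ₗ[S] P)
    (hfSig1 : f.comp fSig = ω • (LinearMap.id : Q →ₗ[S] Q))
    (hfSig2 : fSig.comp f = ω • (LinearMap.id : P →ₗ[S] P)) :
    -- exactness of the first row
    Function.Injective ((LinearMap.id : P →ₗ[S] P).prod f) ∧
    LinearMap.range ((LinearMap.id : P →ₗ[S] P).prod f) =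
      LinearMap.ker ((-f).coprod (LinearMap.id : Q →ₗ[S] Q)) ∧
    Function.Surjective ((-f).coprod (LinearMap.id : Q →ₗ[S] Q)) ∧
    -- exactness of the second row
    Function.Injective (fSig.prod (LinearMap.id : Q →ₗ[S] Q)) ∧
    LinearMap.range (fSig.prod (LinearMap.id : Q →ₗ[S] Q)) =
      LinearMap.ker ((LinearMap.id : P →ₗ[S] P).coprod (-fSig)) ∧
    Function.Surjective ((LinearMap.id : P →ₗ[S] P).coprod (-fSig)) ∧
    -- commutativity of the two squares
    (LinearMap.prodMap (ω • (LinearMap.id : P →ₗ[S] P))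
        (LinearMap.id : Q →ₗ[S] Q)).comp
      ((LinearMap.id : P →ₗ[S] P).prod f) =
      (fSig.prod (LinearMap.id : Q →ₗ[S] Q)).comp f ∧
    (-fSig).comp ((-f).coprod (LinearMap.id : Q →ₗ[S] Q)) =
      ((LinearMap.id : P →ₗ[S] P).coprod (-fSig)).comp
        (LinearMap.prodMap (ω • (LinearMap.id : P →ₗ[S] P))
          (LinearMap.id : Q →ₗ[S] Q)) ∧
    -- `−fSig` is a monomorphism with cokernel annihilated by `ω`
    Function.Injective (-fSig) ∧
    (∀ p : P, ω • p ∈ LinearMap.range (-fSig)) := by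
  have hfSig_inj : Injective fSig :=
    injective_of_comp_eq_smul_id (Module.Flat.isSMulRegular_of_nonZeroDivisors hω) hfSig1
  refine ⟨f.injective_id_prod, f.range_id_prod_eq_ker_neg_coprod_id, (-f).surjective_coprod_id,
    fSig.injective_prod_id, fSig.range_prod_id_eq_ker_id_coprod_neg,
    (-fSig).surjective_id_coprod, smulId_prodMap_comp_id_prod hfSig2,
    neg_comp_neg_coprod_id hfSig2, neg_injective.comp hfSig_inj, fun p => ?_⟩
  rw [range_neg]
  exact smul_mem_range_of_comp_eq_smul_id hfSig2 p

/-- the short exact sequence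
`0 → (P →f→ Q) → (P ⊕ Q →ω⊕id→ P ⊕ Q) → (Q →−fSig→ P) → 0` in `Mon(ω, 𝒫)`,
used in the proof of Theorem 3.2 to compute `Ω⁻¹(P →f→ Q) = (Q →−fSig→ P)`.
Let `f : P → Q` be an injective map of finitely generated projective
`S`-modules with cokernel annihilated by `ω`, and `fSig : Q → P` the unique
map with `f ∘ fSig = ω·id_Q`, `fSig ∘ f = ω·id_P`.  With
`i₁ = (id_P, f)`, `i₀ = (fSig, id_Q)`, `π₁ = [−f, id_Q]`, `π₀ = [id_P, −fSig]`,
the rows `0 → P →i₁→ P ⊕ Q →π₁→ Q → 0` and `0 → Q →i₀→ P ⊕ Q →π₀→ P → 0` are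
exact, the squares `(ω·id_P ⊕ id_Q) ∘ i₁ = i₀ ∘ f` and
`(−fSig) ∘ π₁ = π₀ ∘ (ω·id_P ⊕ id_Q)` commute, and `−fSig` is injective with
cokernel annihilated by `ω`. -/
theorem stmt_12
    {S : Type*} [CommRing S] [IsNoetherianRing S] [IsLocalRing S]
    (ω : S) (hω_mem : ω ∈ IsLocalRing.maximalIdeal S) (hω : ω ∈ nonZeroDivisors S)
    {P Q : Type*}
    [AddCommGroup P] [Module S P] [Module.Finite S P] [Module.Projective S P]
    [AddCommGroup Q] [Module S Q] [Module.Finite S Q] [Module.Projective S Q]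
    (f : P →ₗ[S] Q) (hf : Function.Injective f)
    (hcoker : ∀ q : Q, ω • q ∈ LinearMap.range f)
    (fSig : Q →ₗ[S] P)
    (hfSig1 : f.comp fSig = ω • (LinearMap.id : Q →ₗ[S] Q))
    (hfSig2 : fSig.comp f = ω • (LinearMap.id : P →ₗ[S] P)) :
    -- exactness of the first row
    Function.Injective ((LinearMap.id : P →ₗ[S] P).prod f) ∧
    LinearMap.range ((LinearMap.id : P →ₗ[S] P).prod f) =
      LinearMap.ker ((-f).coprod (LinearMap.id : Q →ₗ[S] Q)) ∧
    Function.Surjective ((-f).coprod (LinearMap.id : Q →ₗ[S] Q)) ∧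
    -- exactness of the second row
    Function.Injective (fSig.prod (LinearMap.id : Q →ₗ[S] Q)) ∧
    LinearMap.range (fSig.prod (LinearMap.id : Q →ₗ[S] Q)) =
      LinearMap.ker ((LinearMap.id : P →ₗ[S] P).coprod (-fSig)) ∧
    Function.Surjective ((LinearMap.id : P →ₗ[S] P).coprod (-fSig)) ∧
    -- commutativity of the two squares
    (LinearMap.prodMap (ω • (LinearMap.id : P →ₗ[S] P))
        (LinearMap.id : Q →ₗ[S] Q)).comp
      ((LinearMap.id : P →ₗ[S] P).prod f) =
      (fSig.prod (LinearMap.id : Q →ₗ[S] Q)).comp f ∧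
    (-fSig).comp ((-f).coprod (LinearMap.id : Q →ₗ[S] Q)) =
      ((LinearMap.id : P →ₗ[S] P).coprod (-fSig)).comp
        (LinearMap.prodMap (ω • (LinearMap.id : P →ₗ[S] P))
          (LinearMap.id : Q →ₗ[S] Q)) ∧
    -- `−fSig` is a monomorphism with cokernel annihilated by `ω`
    Function.Injective (-fSig) ∧
    (∀ p : P, ω • p ∈ LinearMap.range (-fSig)) :=
  stmt_12_general ω hω f fSig hfSig1 hfSig2
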